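/- Suppose there is a decomposition HW(K_u[g]; m, n, α, β) of K_u[g] into α C_m-factors and β C_n-factors, and for each i with 1 ≤ i ≤ α there is a decomposition of C_m[s] into t_i C_{m'}-factors and s − t_i C_{n'}-factors, and for each j with 1 ≤ j ≤ β there is a decomposition of C_n[s] into r_j C_{m'}-factors and s − r_j C_{n'}-factors. Then K_u[gs] admits a decomposition into α' C_{m'}-factors and (α+β)s − α' C_{n'}-factors, where α' = Σ t_i + Σ r_j. -/

import Mathlib

open SimpleGraph

/-- A `C_k`-factor: a spanning 2-regular subgraph all of whose connected
components (necessarily cycles) have exactly `k` vertices. -/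
def IsCycleFactor {V : Type*} (H : SimpleGraph V) (k : ℕ) : Prop :=
  (∀ v : V, (H.neighborSet v).ncard = 2) ∧
  (∀ v : V, (H.connectedComponentMk v).supp.ncard = k)

/-- A 1-factor (perfect matching): every vertex has exactly one neighbour. -/
def IsOneFactor {V : Type*} (H : SimpleGraph V) : Prop :=
  ∀ v : V, (H.neighborSet v).ncard = 1

/-- `F 0, …, F (N-1)` partitions the edge set of `G`. -/
def IsDecompOn {V : Type*} (G : SimpleGraph V) (F : ℕ → SimpleGraph V) (N : ℕ) : Prop :=
  (∀ i < N, F i ≤ G) ∧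
  (∀ i < N, ∀ j < N, i ≠ j → Disjoint (F i).edgeSet (F j).edgeSet) ∧
  G.edgeSet = ⋃ i ∈ Set.Iio N, (F i).edgeSet

/-- A Hamilton–Waterloo decomposition of a graph `G` into `α` `C_m`-factors
and `β` `C_n`-factors. -/
def IsHWGraph {V : Type*} (G : SimpleGraph V) (m n α β : ℕ) : Prop :=
  ∃ F : ℕ → SimpleGraph V, IsDecompOn G F (α + β) ∧
    (∀ i < α, IsCycleFactor (F i) m) ∧
    (∀ i, α ≤ i → i < α + β → IsCycleFactor (F i) n)

/-- `HW v m n α β`: a partition of `E(K_v)` (for `v` odd) or of `E(K_v)` minus a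
perfect matching (for `v` even) into `α` `C_m`-factors and `β` `C_n`-factors. -/
def HW (v m n α β : ℕ) : Prop :=
  ∃ I : SimpleGraph (Fin v),
    (Odd v → I = ⊥) ∧ (Even v → IsOneFactor I) ∧
    IsHWGraph ((⊤ : SimpleGraph (Fin v)) \ I) m n α β

/-- The complete `u`-partite graph with parts of size `g`. -/
def Kpartite (u g : ℕ) : SimpleGraph (Fin u × Fin g) :=
  SimpleGraph.fromRel (fun a b => a.1 ≠ b.1)

/-- The Cayley graph on an additive group with connection set `S`. -/
def cayley (Γ : Type*) [AddGroup Γ] (S : Set Γ) : SimpleGraph Γ :=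
  SimpleGraph.fromRel (fun a b => a - b ∈ S)

/-- The cycle of length `m`, as a graph on `ZMod m`. -/
def cycGraph (m : ℕ) : SimpleGraph (ZMod m) :=
  SimpleGraph.fromRel (fun a b => a = b + 1)

/-- The lexicographic product `G[s]` of `G` with an empty graph on `s` points. -/
def lexProd {V : Type*} (G : SimpleGraph V) (s : ℕ) : SimpleGraph (V × Fin s) :=
  SimpleGraph.fromRel (fun a b => G.Adj a.1 b.1)

/-!
Blowing up every vertex of `K_u[g]` into an independent set of size `s` gives `K_u[g s]`, and the
blow-up turns the partition of `K_u[g]` into `C_m`- and `C_n`-factors `F` into a partition of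
`K_u[g s]` into the blown-up factors `F[s]`. A `C_k`-factor is a disjoint union of copies of `C_k`,
so `F[s]` is a disjoint union of copies of `C_k[s]`; decomposing every copy by the given
decomposition of `C_k[s]` splits `F[s]` into `C_{m'}`- and `C_{n'}`-factors, and collecting these
over all `F` decomposes `K_u[g s]`.
-/

open Finset in
theorem Finset.exists_bijOn_Iio_filter_first {ι : Type*} [Nonempty ι] (P : Finset ι)
    (p : ι → Prop) [DecidablePred p] :
    ∃ σ : ℕ → ι, Set.BijOn σ (Set.Iio (#{i ∈ P | p i} + #{i ∈ P | ¬p i})) P ∧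
      ∀ j < #{i ∈ P | p i} + #{i ∈ P | ¬p i}, (p (σ j) ↔ j < #{i ∈ P | p i}) := by
  set a := #{i ∈ P | p i}
  set b := #{i ∈ P | ¬p i}
  obtain ⟨σm, hσm⟩ : ∃ σ : ℕ → ι, Set.BijOn σ (Set.Iio a) ↑{i ∈ P | p i} :=
    (Set.finite_Iio a).exists_bijOn_of_encard_eq (by
      rw [← coe_range, Set.encard_coe_eq_coe_finsetCard, Set.encard_coe_eq_coe_finsetCard,
        card_range])
  obtain ⟨σn, hσn⟩ : ∃ σ : ℕ → ι, Set.BijOn σ (Set.Ico a (a + b)) ↑{i ∈ P | ¬p i} :=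
    (Set.finite_Ico a (a + b)).exists_bijOn_of_encard_eq (by
      rw [← coe_Ico, Set.encard_coe_eq_coe_finsetCard, Set.encard_coe_eq_coe_finsetCard,
        Nat.card_Ico, Nat.add_sub_cancel_left])
  let σ : ℕ → ι := fun j => if j < a then σm j else σn j
  have hσm' : Set.BijOn σ (Set.Iio a) ↑{i ∈ P | p i} :=
    hσm.congr fun j hj => (if_pos hj).symm
  have hσn' : Set.BijOn σ (Set.Ico a (a + b)) ↑{i ∈ P | ¬p i} :=
    hσn.congr fun j hj => (if_neg (not_lt.mpr hj.1)).symm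
  have hdom : Set.Iio (a + b) = Set.Iio a ∪ Set.Ico a (a + b) := by
    ext j
    simp only [Set.mem_Iio, Set.mem_union, Set.mem_Ico]
    omega
  have hcod : (P : Set ι) = ↑{i ∈ P | p i} ∪ ↑{i ∈ P | ¬p i} := by
    ext i
    simp only [coe_filter, mem_coe, Set.mem_union, Set.mem_ofPred_eq]
    tauto
  refine ⟨σ, ?_, fun j hj => ?_⟩
  · rw [hdom, hcod]
    refine hσm'.union hσn' ((Set.injOn_union ?_).mpr ⟨hσm'.injOn, hσn'.injOn, ?_⟩)
    · exact Set.disjoint_left.mpr fun j hj hj' => (Set.mem_Ico.mp hj').1.not_gt hj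
    · intro j hj j' hj' hjj'
      have h := hσm'.mapsTo hj
      have h' := hσn'.mapsTo hj'
      simp only [coe_filter, Set.mem_ofPred_eq] at h h'
      exact h'.2 (hjj' ▸ h.2)
  · by_cases hja : j < a
    · have h := hσm'.mapsTo hja
      simp only [coe_filter, Set.mem_ofPred_eq] at h
      exact iff_of_true h.2 hja
    · have h := hσn'.mapsTo (Set.mem_Ico.mpr ⟨not_lt.mp hja, hj⟩)
      simp only [coe_filter, Set.mem_ofPred_eq] at h
      exact iff_of_false h.2 hja

namespace SimpleGraph

variable {V W ι κ : Type*}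

def IsEdgePartition (G : SimpleGraph V) (F : ι → SimpleGraph V) (I : Set ι) : Prop :=
  I.PairwiseDisjoint F ∧ G = ⨆ i ∈ I, F i

theorem isDecompOn_iff_isEdgePartition {G : SimpleGraph V} {F : ℕ → SimpleGraph V} {N : ℕ} :
    IsDecompOn G F N ↔ IsEdgePartition G F (Set.Iio N) := by
  have hunion : G.edgeSet = ⋃ i ∈ Set.Iio N, (F i).edgeSet ↔ G = ⨆ i ∈ Set.Iio N, F i := by
    simp only [← edgeSet_inj, edgeSet_iSup]
  refine ⟨fun ⟨_, hdisj, hG⟩ => ⟨fun i hi j hj hij => disjoint_edgeSet.mp (hdisj i hi j hj hij),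
    hunion.mp hG⟩, fun ⟨hdisj, hG⟩ => ⟨fun i hi => hG ▸ le_biSup F (Set.mem_Iio.mpr hi),
    fun i hi j hj hij => disjoint_edgeSet.mpr (hdisj hi hj hij), hunion.mpr hG⟩⟩

namespace IsEdgePartition

variable {G : SimpleGraph V} {F : ι → SimpleGraph V} {I : Set ι}

theorem le (h : IsEdgePartition G F I) {i : ι} (hi : i ∈ I) : F i ≤ G :=
  h.2 ▸ le_biSup F hi

theorem comp_bijOn {J : Set κ} {σ : κ → ι} (h : IsEdgePartition G F I) (hσ : Set.BijOn σ J I) :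
    IsEdgePartition G (F ∘ σ) J := by
  refine ⟨fun j hj j' hj' hne => h.1 (hσ.mapsTo hj) (hσ.mapsTo hj') (hσ.injOn.ne hj hj' hne), ?_⟩
  rw [h.2, ← hσ.image_eq, iSup_image]
  rfl

theorem uncurry {J : Set κ} {K : ι → κ → SimpleGraph V} (hF : IsEdgePartition G F I)
    (hK : ∀ i ∈ I, IsEdgePartition (F i) (K i) J) :
    IsEdgePartition G (Function.uncurry K) (I ×ˢ J) := by
  refine ⟨?_, ?_⟩
  · rintro ⟨i, j⟩ ⟨hi, hj⟩ ⟨i', j'⟩ ⟨hi', hj'⟩ hne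
    by_cases hii : i = i'
    · subst hii
      exact (hK i hi).1 hj hj' fun hjj => hne (Prod.ext rfl hjj)
    · exact (hF.1 hi hi' hii).mono ((hK i hi).le hj) ((hK i' hi').le hj')
  · rw [hF.2, biSup_prod]
    exact iSup_congr fun i => iSup_congr fun hi => (hK i hi).2

theorem comap (h : IsEdgePartition G F I) (f : W → V) :
    IsEdgePartition (G.comap f) (fun i => (F i).comap f) I := by
  refine ⟨fun i hi j hj hij => ?_, ?_⟩
  · exact disjoint_left.mpr fun x y hxy => disjoint_left.mp (h.1 hi hj hij) _ _ hxy
  · ext x y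
    simp [h.2]

theorem bot_boxProd (h : IsEdgePartition G F I) :
    IsEdgePartition ((⊥ : SimpleGraph W) □ G) (fun i => (⊥ : SimpleGraph W) □ F i) I := by
  refine ⟨fun i hi j hj hij => ?_, ?_⟩
  · refine disjoint_left.mpr fun x y hxy hxy' => ?_
    simp only [boxProd_adj, bot_adj, false_and, false_or] at hxy hxy'
    exact disjoint_left.mp (h.1 hi hj hij) _ _ hxy.1 hxy'.1
  · ext x y
    simp only [h.2, boxProd_adj, bot_adj, false_and, false_or, iSup_adj]
    aesop

open Finset in
theorem isHWGraph [Nonempty ι] {K : ι → SimpleGraph V} {P : Finset ι} {m n : ℕ}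
    (hK : G.IsEdgePartition K P) (p : ι → Prop) [DecidablePred p]
    (hm : ∀ i ∈ P, p i → IsCycleFactor (K i) m) (hn : ∀ i ∈ P, ¬p i → IsCycleFactor (K i) n) :
    IsHWGraph G m n #{i ∈ P | p i} #{i ∈ P | ¬p i} := by
  obtain ⟨σ, hσ, hσp⟩ := P.exists_bijOn_Iio_filter_first p
  refine ⟨K ∘ σ, isDecompOn_iff_isEdgePartition.mpr (hK.comp_bijOn hσ), fun j hj => ?_,
    fun j hj hj' => ?_⟩
  · exact hm _ (hσ.mapsTo (Set.mem_Iio.mpr (by omega))) ((hσp j (by omega)).mpr hj)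
  · exact hn _ (hσ.mapsTo (Set.mem_Iio.mpr hj')) fun h => ((hσp j hj').mp h).not_ge hj

end IsEdgePartition

end SimpleGraph

section Transfer

variable {V W : Type*}

theorem IsCycleFactor.comap_equiv {G : SimpleGraph V} {k : ℕ} (h : IsCycleFactor G k)
    (e : W ≃ V) : IsCycleFactor (G.comap e) k := by
  have hsupp (w : W) : ((G.comap e).connectedComponentMk w).supp
      = e ⁻¹' (G.connectedComponentMk (e w)).supp := by
    ext x
    simp only [ConnectedComponent.mem_supp_iff, ConnectedComponent.eq, Set.mem_preimage]
    exact (Iso.comap e G).reachable_iff.symm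
  refine ⟨fun w => ?_, fun w => ?_⟩
  · rw [show (G.comap e).neighborSet w = e ⁻¹' G.neighborSet (e w) from rfl,
      Set.ncard_preimage_of_injective_subset_range e.injective (by simp), h.1]
  · rw [hsupp, Set.ncard_preimage_of_injective_subset_range e.injective (by simp), h.2]

theorem IsCycleFactor.bot_boxProd {G : SimpleGraph V} {k : ℕ} (h : IsCycleFactor G k) :
    IsCycleFactor ((⊥ : SimpleGraph W) □ G) k := by
  have hsupp (x : W × V) : (((⊥ : SimpleGraph W) □ G).connectedComponentMk x).supp
      = {x.1} ×ˢ (G.connectedComponentMk x.2).supp := by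
    ext y
    simp [ConnectedComponent.mem_supp_iff, ConnectedComponent.eq, reachable_boxProd]
  refine ⟨fun x => ?_, fun x => ?_⟩
  · rw [neighborSet_boxProd, neighborSet_bot, Set.empty_prod, Set.empty_union, Set.ncard_prod,
      Set.ncard_singleton, one_mul, h.1]
  · rw [hsupp, Set.ncard_prod, Set.ncard_singleton, one_mul, h.2]

theorem IsHWGraph.comap_equiv {G : SimpleGraph V} {m n α β : ℕ} (h : IsHWGraph G m n α β)
    (e : W ≃ V) : IsHWGraph (G.comap e) m n α β := by
  obtain ⟨F, hF, hm, hn⟩ := h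
  exact ⟨fun i => (F i).comap e,
    isDecompOn_iff_isEdgePartition.mpr ((isDecompOn_iff_isEdgePartition.mp hF).comap e),
    fun i hi => (hm i hi).comap_equiv e, fun i hi hi' => (hn i hi hi').comap_equiv e⟩

theorem IsHWGraph.bot_boxProd {G : SimpleGraph V} {m n α β : ℕ} (h : IsHWGraph G m n α β) :
    IsHWGraph ((⊥ : SimpleGraph W) □ G) m n α β := by
  obtain ⟨F, hF, hm, hn⟩ := h
  exact ⟨fun i => (⊥ : SimpleGraph W) □ F i,
    isDecompOn_iff_isEdgePartition.mpr (isDecompOn_iff_isEdgePartition.mp hF).bot_boxProd,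
    fun i hi => (hm i hi).bot_boxProd, fun i hi hi' => (hn i hi hi').bot_boxProd⟩

end Transfer

namespace SimpleGraph.Walk

variable {V : Type*} {G : SimpleGraph V} {u : V}

def cycleVert (p : G.Walk u u) (a : ZMod p.length) : V :=
  p.getVert a.val

namespace IsCycle

variable {p : G.Walk u u} (hp : p.IsCycle)
include hp

theorem neZero_length : NeZero p.length :=
  ⟨by have := hp.three_le_length; omega⟩

theorem getVert_eq_cycleVert {i : ℕ} (hi : i ≤ p.length) : p.getVert i = p.cycleVert i := by
  have := hp.neZero_length
  rcases hi.lt_or_eq with hi | rfl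
  · rw [cycleVert, ZMod.val_natCast, Nat.mod_eq_of_lt hi]
  · rw [cycleVert, ZMod.natCast_self, ZMod.val_zero, getVert_length, getVert_zero]

theorem injective_cycleVert : Function.Injective p.cycleVert := by
  have := hp.neZero_length
  intro a b hab
  have ha := ZMod.val_lt a
  have hb := ZMod.val_lt b
  exact ZMod.val_injective _ (hp.getVert_injOn' (by simp only [Set.mem_ofPred_eq]; omega)
    (by simp only [Set.mem_ofPred_eq]; omega) hab)

theorem range_cycleVert : Set.range p.cycleVert = {w | w ∈ p.support} := by
  ext w
  refine ⟨fun ⟨a, ha⟩ => ha ▸ p.getVert_mem_support _, fun hw => ?_⟩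
  obtain ⟨i, rfl, hi⟩ := mem_support_iff_exists_getVert.mp hw
  exact ⟨i, (hp.getVert_eq_cycleVert hi).symm⟩

theorem toSubgraph_adj_cycleVert (a b : ZMod p.length) :
    p.toSubgraph.Adj (p.cycleVert a) (p.cycleVert b) ↔ (cycGraph p.length).Adj a b := by
  have := hp.neZero_length
  have hinj := hp.injective_cycleVert
  have hstep : (∃ i, s(p.getVert i, p.getVert (i + 1)) = s(p.cycleVert a, p.cycleVert b) ∧
      i < p.length) ↔ ∃ c : ZMod p.length,
        s(p.cycleVert c, p.cycleVert (c + 1)) = s(p.cycleVert a, p.cycleVert b) := by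
    constructor
    · rintro ⟨i, hi, hlt⟩
      refine ⟨i, ?_⟩
      rwa [hp.getVert_eq_cycleVert hlt.le, hp.getVert_eq_cycleVert hlt, Nat.cast_succ] at hi
    · rintro ⟨c, hc⟩
      refine ⟨c.val, ?_, ZMod.val_lt c⟩
      rwa [hp.getVert_eq_cycleVert (ZMod.val_lt c).le,
        hp.getVert_eq_cycleVert (ZMod.val_lt c), Nat.cast_succ, ZMod.natCast_zmod_val]
  have : Fact (1 < p.length) := ⟨by have := hp.three_le_length; omega⟩
  have hne (c : ZMod p.length) : c ≠ c + 1 := by simp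
  rw [toSubgraph_adj_iff, hstep, cycGraph, fromRel_adj]
  simp only [Sym2.eq_iff, hinj.eq_iff]
  constructor
  · rintro ⟨c, ⟨rfl, rfl⟩ | ⟨rfl, rfl⟩⟩
    · exact ⟨hne c, Or.inr rfl⟩
    · exact ⟨(hne c).symm, Or.inl rfl⟩
  · rintro ⟨-, rfl | rfl⟩
    · exact ⟨b, Or.inr ⟨rfl, rfl⟩⟩
    · exact ⟨a, Or.inl ⟨rfl, rfl⟩⟩

end IsCycle

end SimpleGraph.Walk

theorem IsCycleFactor.exists_embedding_range_eq_supp {V : Type*} [Finite V] {H : SimpleGraph V}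
    {k : ℕ} (h : IsCycleFactor H k) (c : H.ConnectedComponent) :
    ∃ φ : cycGraph k ↪g H, Set.range φ = c.supp := by
  classical
  have := Fintype.ofFinite V
  obtain ⟨v, rfl⟩ := c.exists_rep
  have hcyc : H.IsCycles := fun w _ => h.1 w
  obtain ⟨p, hp, hverts⟩ := hcyc.exists_cycle_toSubgraph_verts_eq_connectedComponentSupp
    (v := v) (c := H.connectedComponentMk v) rfl
    (Set.nonempty_of_ncard_ne_zero (by rw [h.1]; norm_num))
  have hrange : Set.range p.cycleVert = (H.connectedComponentMk v).supp := by
    rw [hp.range_cycleVert, ← hverts, Walk.verts_toSubgraph]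
  have := hp.neZero_length
  obtain rfl : p.length = k := by
    rw [← h.2 v, ← hrange, Set.ncard_range_of_injective hp.injective_cycleVert, Nat.card_zmod]
  refine ⟨⟨⟨p.cycleVert, hp.injective_cycleVert⟩, fun {a b} => ?_⟩, hrange⟩
  have hmem : p.cycleVert a ∈ p.toSubgraph.verts := by
    rw [hverts, ← hrange]
    exact ⟨a, rfl⟩
  simp only [Function.Embedding.coeFn_mk]
  rw [← hp.adj_toSubgraph_iff_of_isCycles hcyc hmem, hp.toSubgraph_adj_cycleVert]

theorem IsCycleFactor.nonempty_iso {V : Type*} [Finite V] {H : SimpleGraph V} {k : ℕ}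
    (h : IsCycleFactor H k) :
    Nonempty (((⊥ : SimpleGraph H.ConnectedComponent) □ cycGraph k) ≃g H) := by
  choose φ hφ using h.exists_embedding_range_eq_supp
  have hcomp (c : H.ConnectedComponent) (a : ZMod k) : H.connectedComponentMk (φ c a) = c := by
    rw [← ConnectedComponent.mem_supp_iff, ← hφ c]
    exact ⟨a, rfl⟩
  let Φ : H.ConnectedComponent × ZMod k → V := fun x => φ x.1 x.2
  have hΦ : Function.Bijective Φ := by
    refine ⟨fun ⟨c, a⟩ ⟨c', a'⟩ he => ?_, fun v => ?_⟩
    · obtain rfl : c = c' := (hcomp c a).symm.trans ((congrArg _ he).trans (hcomp c' a'))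
      exact Prod.ext rfl ((φ c).injective he)
    · obtain ⟨a, ha⟩ : v ∈ Set.range (φ (H.connectedComponentMk v)) := by
        rw [hφ]; rfl
      exact ⟨(_, a), ha⟩
  refine ⟨⟨Equiv.ofBijective Φ hΦ, fun {x y} => ?_⟩⟩
  obtain ⟨c, a⟩ := x
  obtain ⟨c', b⟩ := y
  simp only [Equiv.ofBijective_apply, boxProd_adj, bot_adj, false_and, false_or, Φ]
  constructor
  · intro hadj
    obtain rfl : c = c' :=
      (hcomp c a).symm.trans ((ConnectedComponent.connectedComponentMk_eq_of_adj hadj).trans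
        (hcomp c' b))
    exact ⟨(φ c).map_rel_iff.mp hadj, rfl⟩
  · rintro ⟨hadj, rfl⟩
    exact (φ c).map_rel_iff.mpr hadj

theorem lexProd_eq_comap {V : Type*} (G : SimpleGraph V) (s : ℕ) :
    lexProd G s = G.comap Prod.fst := by
  ext x y
  simp only [lexProd, fromRel_adj, comap_adj]
  exact ⟨fun ⟨_, h⟩ => h.elim id fun h => h.symm,
    fun h => ⟨fun hxy => h.ne (congrArg _ hxy), Or.inl h⟩⟩

theorem IsCycleFactor.isHWGraph_lexProd {V : Type*} [Finite V] {F : SimpleGraph V}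
    {k s m n α β : ℕ} (hF : IsCycleFactor F k)
    (h : IsHWGraph (lexProd (cycGraph k) s) m n α β) : IsHWGraph (lexProd F s) m n α β := by
  obtain ⟨φ⟩ := hF.nonempty_iso
  let e := (φ.symm.toEquiv.prodCongr (Equiv.refl (Fin s))).trans (Equiv.prodAssoc _ _ _)
  have hlex : lexProd F s
      = ((⊥ : SimpleGraph F.ConnectedComponent) □ lexProd (cycGraph k) s).comap e := by
    ext x y
    rw [lexProd_eq_comap, lexProd_eq_comap, comap_adj, comap_adj, ← φ.symm.map_rel_iff]
    simp [e, boxProd_adj]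
  rw [hlex]
  exact h.bot_boxProd.comap_equiv e

theorem IsDecompOn.lexProd {V : Type*} {G : SimpleGraph V} {F : ℕ → SimpleGraph V} {N : ℕ}
    (h : IsDecompOn G F N) (s : ℕ) : IsDecompOn (lexProd G s) (fun i => lexProd (F i) s) N := by
  simp only [lexProd_eq_comap]
  exact isDecompOn_iff_isEdgePartition.mpr ((isDecompOn_iff_isEdgePartition.mp h).comap _)

open Finset in
theorem IsDecompOn.isHWGraph_of_forall_isHWGraph {V : Type*} {G : SimpleGraph V}
    {F : ℕ → SimpleGraph V} {N s m n : ℕ} {a : ℕ → ℕ} (hF : IsDecompOn G F N)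
    (h : ∀ i < N, a i ≤ s ∧ IsHWGraph (F i) m n (a i) (s - a i)) :
    IsHWGraph G m n (∑ i ∈ range N, a i) (N * s - ∑ i ∈ range N, a i) := by
  have hK (i : ℕ) : ∃ K : ℕ → SimpleGraph V, i < N → IsDecompOn (F i) K s ∧
      (∀ j < a i, IsCycleFactor (K j) m) ∧ (∀ j, a i ≤ j → j < s → IsCycleFactor (K j) n) := by
    by_cases hi : i < N
    · obtain ⟨has, K, hK, hm, hn⟩ := h i hi
      rw [Nat.add_sub_cancel' has] at hK hn
      exact ⟨K, fun _ => ⟨hK, hm, hn⟩⟩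
    · exact ⟨fun _ => ⊥, fun h => absurd h hi⟩
  choose K hK using hK
  have hpart : G.IsEdgePartition (Function.uncurry K) ↑(range N ×ˢ range s) := by
    rw [coe_product, coe_range, coe_range]
    exact (isDecompOn_iff_isEdgePartition.mp hF).uncurry fun i hi =>
      isDecompOn_iff_isEdgePartition.mp (hK i hi).1
  have hcard : #{x ∈ range N ×ˢ range s | x.2 < a x.1} = ∑ i ∈ range N, a i := by
    rw [card_filter, sum_product]
    refine sum_congr rfl fun i hi => ?_
    have has := (h i (mem_range.mp hi)).1
    rw [← card_filter, show {j ∈ range s | j < a i} = range (a i) by ext j; simp; omega,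
      card_range]
  have hcard' : #{x ∈ range N ×ˢ range s | ¬x.2 < a x.1} = N * s - ∑ i ∈ range N, a i := by
    have := card_filter_add_card_filter_not (s := range N ×ˢ range s) (fun x => x.2 < a x.1)
    rw [card_product, card_range, card_range] at this
    omega
  rw [← hcard', ← hcard]
  refine hpart.isHWGraph (fun x => x.2 < a x.1) (fun x hx hlt => ?_) (fun x hx hge => ?_)
  · obtain ⟨hi, -⟩ := mem_product.mp hx
    exact (hK x.1 (mem_range.mp hi)).2.1 _ hlt
  · obtain ⟨hi, hj⟩ := mem_product.mp hx
    exact (hK x.1 (mem_range.mp hi)).2.2 _ (not_lt.mp hge) (mem_range.mp hj)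

theorem kpartite_eq_comap (u g : ℕ) :
    Kpartite u g = (⊤ : SimpleGraph (Fin u)).comap Prod.fst := by
  ext x y
  simp only [Kpartite, fromRel_adj, comap_adj, top_adj]
  exact ⟨fun ⟨_, h⟩ => h.elim id Ne.symm, fun h => ⟨fun hxy => h (congrArg _ hxy), Or.inl h⟩⟩

theorem kpartite_mul_eq_comap (u g s : ℕ) :
    Kpartite u (g * s) = (lexProd (Kpartite u g) s).comap
      ((Equiv.prodCongr (Equiv.refl (Fin u)) finProdFinEquiv.symm).trans
        (Equiv.prodAssoc _ _ _).symm) := by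
  ext x y
  simp [kpartite_eq_comap, lexProd_eq_comap]

theorem stmt_8 (u g s m n m' n' α β : ℕ) (t r : ℕ → ℕ)
    (hG : IsHWGraph (Kpartite u g) m n α β)
    (ht : ∀ i, 1 ≤ i → i ≤ α →
      t i ≤ s ∧ IsHWGraph (lexProd (cycGraph m) s) m' n' (t i) (s - t i))
    (hr : ∀ j, 1 ≤ j → j ≤ β →
      r j ≤ s ∧ IsHWGraph (lexProd (cycGraph n) s) m' n' (r j) (s - r j)) :
    IsHWGraph (Kpartite u (g * s)) m' n'
      ((∑ i ∈ Finset.Icc 1 α, t i) + (∑ j ∈ Finset.Icc 1 β, r j))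
      ((α + β) * s - ((∑ i ∈ Finset.Icc 1 α, t i) + (∑ j ∈ Finset.Icc 1 β, r j))) := by
  obtain ⟨F, hF, hm, hn⟩ := hG
  -- the factors of `K_u[g]` are indexed from `0`, the parameters `t`, `r` from `1`
  set t' : ℕ → ℕ := fun i => if i < α then t (i + 1) else r (i - α + 1)
  have hIcc (f : ℕ → ℕ) (k : ℕ) : ∑ i ∈ Finset.Icc 1 k, f i = ∑ i ∈ Finset.range k, f (i + 1) := by
    rw [Finset.range_eq_Ico, Finset.sum_Ico_add', ← Finset.Ico_add_one_right_eq_Icc, zero_add]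
  have hsum : ∑ i ∈ Finset.range (α + β), t' i
      = (∑ i ∈ Finset.Icc 1 α, t i) + ∑ j ∈ Finset.Icc 1 β, r j := by
    rw [Finset.sum_range_add, hIcc, hIcc]
    congr 1
    · exact Finset.sum_congr rfl fun i hi => if_pos (Finset.mem_range.mp hi)
    · refine Finset.sum_congr rfl fun j _ => ?_
      simp [t']
  have hblow : ∀ i < α + β, t' i ≤ s ∧ IsHWGraph (lexProd (F i) s) m' n' (t' i) (s - t' i) := by
    intro i hi
    by_cases h : i < α
    · simp only [t', if_pos h]
      obtain ⟨hle, hHW⟩ := ht (i + 1) (by omega) (by omega)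
      exact ⟨hle, (hm i h).isHWGraph_lexProd hHW⟩
    · simp only [t', if_neg h]
      obtain ⟨hle, hHW⟩ := hr (i - α + 1) (by omega) (by omega)
      exact ⟨hle, (hn i (not_lt.mp h) hi).isHWGraph_lexProd hHW⟩
  rw [← hsum, kpartite_mul_eq_comap]
  exact ((hF.lexProd s).isHWGraph_of_forall_isHWGraph hblow).comap_equiv _
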